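/- The number of covariant causets (c-causets) with cardinality n, up to isomorphism, equals 2^(n-1). Equivalently, a c-causet with n elements is uniquely determined by its shell sequence, which is a composition of n (an ordered sequence of positive integers summing to n), and there are 2^(n-1) compositions of n. -/

import Mathlib

/-!
In a finite c-causet, `a < b` holds exactly when `height a < height b`, so the order is
determined by the height function, and two c-causets are isomorphic as soon as their shells have
the same sizes. The heights that occur form an initial segment `0, …, k - 1` of `ℕ`, so the
shell sizes form a composition of `n`, the shell sequence. Conversely every composition of `n`
is the shell sequence of `Fin n` ordered by the block index. Isomorphism classes of c-causets
therefore correspond to compositions of `n`, of which there are `2 ^ (n - 1)`.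
-/

/-- A c-causet structure on `Fin n`: a partial order in which any two elements of
different heights are comparable. -/
def CCausetOrder (n : ℕ) : Type :=
  {r : PartialOrder (Fin n) //
    ∀ a b : Fin n, @Order.height (Fin n) r.toPreorder a ≠ @Order.height (Fin n) r.toPreorder b →
      r.lt a b ∨ r.lt b a}

/-- Order isomorphism of two c-causet structures on `Fin n`. -/
def CCausetIso {n : ℕ} (r s : CCausetOrder n) : Prop :=
  ∃ e : Fin n ≃ Fin n, ∀ a b : Fin n, r.1.lt a b ↔ s.1.lt (e a) (e b)

open Order Finset

def IsCCauset (α : Type*) [Preorder α] : Prop :=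
  ∀ a b : α, height a ≠ height b → a < b ∨ b < a

section Preorder
variable {α β : Type*} [Preorder α] [Preorder β]

lemma Order.height_lt_top_of_fintype [Fintype α] (a : α) : height a < ⊤ :=
  (height_le fun p _ => Nat.cast_le.2 p.length_lt_card.le).trans_lt (ENat.natCast_lt_top _)

lemma Order.height_eq_of_forall_lt_iff {a b : α} (h : ∀ y, y < a ↔ y < b) :
    height a = height b := by
  rw [height_eq_iSup_lt_height a, height_eq_iSup_lt_height b]
  simp_rw [h]

lemma Order.height_eq_of_lt_iff_lt {f : α → ℕ} (hf : ∀ a b, a < b ↔ f a < f b)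
    (hdown : ∀ a, ∀ j < f a, ∃ b, f b = j) (a : α) : height a = f a := by
  induction hm : f a using Nat.strong_induction_on generalizing a with
  | _ m ih =>
  apply le_antisymm
  · rw [height_le_coe_iff]
    intro b hb
    have hbm : f b < m := hm ▸ (hf b a).1 hb
    rw [ih _ hbm b rfl]
    exact_mod_cast hbm
  · cases m with
    | zero => simp
    | succ m =>
      obtain ⟨b, hb⟩ := hdown a m (by omega)
      calc ((m + 1 : ℕ) : ℕ∞) = height b + 1 := by rw [ih m (by omega) b hb]; push_cast; rfl
        _ ≤ height a := height_add_one_le ((hf b a).2 (by omega))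

lemma IsCCauset.lt_iff_height_lt [Fintype α] (h : IsCCauset α) {a b : α} :
    a < b ↔ height a < height b := by
  refine ⟨fun hab => height_strictMono hab (height_lt_top_of_fintype a), fun hab => ?_⟩
  exact (h a b hab.ne).resolve_right fun hba =>
    (height_strictMono hba (height_lt_top_of_fintype b)).not_gt hab

lemma Order.exists_height_eq_of_le [Fintype α] {a : α} {j : ℕ} (hj : (j : ℕ∞) ≤ height a) :
    ∃ b : α, height b = j := by
  rcases hj.eq_or_lt with hj | hj
  · exact ⟨a, hj.symm⟩
  · obtain ⟨b, -, hb⟩ := (coe_lt_height_iff (height_lt_top_of_fintype a)).1 hj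
    exact ⟨b, hb⟩

noncomputable def shellCard (α : Type*) [Preorder α] (j : ℕ) : ℕ :=
  Nat.card {a : α // height a = j}

lemma OrderIso.shellCard_eq (e : α ≃o β) : shellCard α = shellCard β :=
  funext fun j => Nat.card_congr <| e.toEquiv.subtypeEquiv fun a => by
    rw [← height_orderIso e a]; rfl

lemma Order.isEmpty_height_eq_top [Fintype α] : IsEmpty {a : α // height a = ⊤} :=
  ⟨fun a => (height_lt_top_of_fintype a.1).ne a.2⟩

end Preorder

section PartialOrder
variable {α β : Type*} [PartialOrder α] [PartialOrder β]

theorem IsCCauset.nonempty_orderIso [Fintype α] [Fintype β] (hα : IsCCauset α)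
    (hβ : IsCCauset β) (h : shellCard α = shellCard β) : Nonempty (α ≃o β) := by
  have fiber (c : ℕ∞) : Nonempty ({a : α // height a = c} ≃ {b : β // height b = c}) := by
    induction c using ENat.recTopCoe with
    | top =>
      have := isEmpty_height_eq_top (α := α)
      have := isEmpty_height_eq_top (α := β)
      exact ⟨Equiv.equivOfIsEmpty _ _⟩
    | coe j => exact Finite.card_eq.1 (congrFun h j)
  let e : α ≃ β := Equiv.ofFiberEquiv fun c => (fiber c).some
  have he (a : α) : height (e a) = height a := Equiv.ofFiberEquiv_map _ a
  refine ⟨OrderIso.ofRelIsoLT ⟨e, fun {a b} => ?_⟩⟩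
  simp only [hα.lt_iff_height_lt, hβ.lt_iff_height_lt, he]

end PartialOrder

section Shells
variable {α : Type*} [Preorder α] [Fintype α]

noncomputable def numShells (α : Type*) [Preorder α] [Fintype α] : ℕ :=
  univ.sup fun a : α => (height a).toNat + 1

lemma Order.coe_toNat_height (a : α) : ((height a).toNat : ℕ∞) = height a :=
  ENat.natCast_toNat (height_lt_top_of_fintype a).ne

lemma Order.height_lt_numShells (a : α) : height a < numShells α := by
  rw [← coe_toNat_height a, Nat.cast_lt, Nat.lt_iff_add_one_le]
  exact le_sup (f := fun a : α => (height a).toNat + 1) (mem_univ a)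

lemma exists_height_eq_of_lt_numShells {j : ℕ} (hj : j < numShells α) :
    ∃ a : α, height a = j := by
  obtain ⟨a, -, ha⟩ := Finset.lt_sup_iff.1 hj
  refine exists_height_eq_of_le (a := a) ?_
  rw [← coe_toNat_height a, Nat.cast_le]
  omega

lemma shellCard_pos {j : ℕ} (hj : j < numShells α) : 0 < shellCard α j := by
  obtain ⟨a, ha⟩ := exists_height_eq_of_lt_numShells hj
  exact Nat.card_pos_iff.2 ⟨⟨⟨a, ha⟩⟩, inferInstance⟩

lemma shellCard_eq_zero {j : ℕ} (hj : numShells α ≤ j) : shellCard α j = 0 := by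
  refine @Nat.card_of_isEmpty _ ⟨fun a => ?_⟩
  have := a.2 ▸ height_lt_numShells a.1
  exact absurd (Nat.cast_lt.1 this) hj.not_gt

noncomputable def shellSizes (α : Type*) [Preorder α] [Fintype α] : List ℕ :=
  (List.range (numShells α)).map (shellCard α)

lemma getD_shellSizes (j : ℕ) : (shellSizes α).getD j 0 = shellCard α j := by
  rw [shellSizes, List.getD_eq_getElem?_getD, List.getElem?_map]
  by_cases hj : j < numShells α
  · simp [List.getElem?_range hj]
  · simp [hj, shellCard_eq_zero (not_lt.1 hj)]

lemma pos_of_mem_shellSizes {i : ℕ} (hi : i ∈ shellSizes α) : 0 < i := by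
  obtain ⟨j, hj, rfl⟩ := List.mem_map.1 hi
  exact shellCard_pos (List.mem_range.1 hj)

lemma sum_shellSizes : (shellSizes α).sum = Fintype.card α := by
  classical
  have hsum : (shellSizes α).sum = ∑ j ∈ range (numShells α), shellCard α j := by
    simp [shellSizes, Finset.sum, Finset.range_val, Multiset.range]
  have hmaps : Set.MapsTo (fun a : α => (height a).toNat) ↑(univ : Finset α)
      ↑(range (numShells α)) := by
    intro a _
    have := height_lt_numShells a
    rw [← coe_toNat_height a, Nat.cast_lt] at this
    simpa using this
  rw [hsum, ← card_univ, card_eq_sum_card_fiberwise hmaps]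
  refine sum_congr rfl fun j _ => ?_
  rw [shellCard, Nat.card_eq_fintype_card, Fintype.card_subtype]
  congr 1
  ext a
  simp only [mem_filter, mem_univ, true_and]
  rw [← Nat.cast_inj (R := ℕ∞), coe_toNat_height]

end Shells

lemma List.eq_of_getD_eq_of_pos {l₁ l₂ : List ℕ} (h₁ : ∀ i ∈ l₁, 0 < i) (h₂ : ∀ i ∈ l₂, 0 < i)
    (h : ∀ j, l₁.getD j 0 = l₂.getD j 0) : l₁ = l₂ := by
  have hlen : l₁.length = l₂.length := by
    by_contra hne
    wlog hlt : l₁.length < l₂.length generalizing l₁ l₂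
    · exact this h₂ h₁ (fun j => (h j).symm) (Ne.symm hne) (by omega)
    have := h l₁.length
    rw [List.getD_eq_default _ _ le_rfl, List.getD_eq_getElem _ _ hlt] at this
    exact (h₂ _ (List.getElem_mem hlt)).ne this
  refine List.ext_getElem hlen fun j hj₁ hj₂ => ?_
  have := h j
  rwa [List.getD_eq_getElem _ _ hj₁, List.getD_eq_getElem _ _ hj₂] at this

lemma Composition.eq_of_getD_blocks_eq {n : ℕ} {c c' : Composition n}
    (h : ∀ j, c.blocks.getD j 0 = c'.blocks.getD j 0) : c = c' :=
  Composition.ext (List.eq_of_getD_eq_of_pos (fun _ => c.blocks_pos) (fun _ => c'.blocks_pos) h)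

@[reducible] def PartialOrder.layered {α β : Type*} [Preorder β] (f : α → β) : PartialOrder α where
  le a b := a = b ∨ f a < f b
  lt a b := f a < f b
  le_refl _ := Or.inl rfl
  le_trans _ _ _ := by
    rintro (rfl | hab) (rfl | hbc)
    exacts [Or.inl rfl, Or.inr hbc, Or.inr hab, Or.inr (hab.trans hbc)]
  lt_iff_le_not_ge _ _ := by
    refine ⟨fun h => ⟨Or.inr h, ?_⟩, ?_⟩
    · rintro (rfl | h')
      exacts [lt_irrefl _ h, h.asymm h']
    · rintro ⟨rfl | h, h'⟩
      exacts [absurd (Or.inl rfl) h', h]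
  le_antisymm _ _ := by
    rintro (rfl | hab) (h | hba)
    exacts [rfl, rfl, h.symm, absurd hba hab.asymm]

lemma isCCauset_layered {α β : Type*} [LinearOrder β] (f : α → β) :
    @IsCCauset α (PartialOrder.layered f).toPreorder := by
  let := PartialOrder.layered f
  intro a b hab
  have hf : f a ≠ f b := fun hf => hab <| height_eq_of_forall_lt_iff fun y =>
    show f y < f a ↔ f y < f b by rw [hf]
  exact lt_or_gt_of_ne hf

namespace CCausetOrder
variable {n : ℕ}

/-- `Fin n` carrying the order `r` as an instance, so that the order API applies to `r`. -/
def Carrier (_ : CCausetOrder n) : Type := Fin n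

instance (r : CCausetOrder n) : PartialOrder r.Carrier := r.1

instance {r : CCausetOrder n} : Fintype r.Carrier := inferInstanceAs (Fintype (Fin n))

lemma isCCauset (r : CCausetOrder n) : IsCCauset r.Carrier := r.2

variable {r s : CCausetOrder n}

lemma iso_iff_nonempty_orderIso : CCausetIso r s ↔ Nonempty (r.Carrier ≃o s.Carrier) :=
  ⟨fun ⟨e, he⟩ => ⟨OrderIso.ofRelIsoLT ⟨e, (he _ _).symm⟩⟩,
    fun ⟨e⟩ => ⟨e.toEquiv, fun _ _ => e.lt_iff_lt.symm⟩⟩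

lemma iso_iff_shellCard_eq : CCausetIso r s ↔ shellCard r.Carrier = shellCard s.Carrier :=
  iso_iff_nonempty_orderIso.trans
    ⟨fun ⟨e⟩ => e.shellCard_eq, r.isCCauset.nonempty_orderIso s.isCCauset⟩

noncomputable def shellSeq (r : CCausetOrder n) : Composition n where
  blocks := shellSizes r.Carrier
  blocks_pos := pos_of_mem_shellSizes
  blocks_sum := sum_shellSizes.trans (Fintype.card_fin n)

lemma getD_blocks_shellSeq (r : CCausetOrder n) (j : ℕ) :
    r.shellSeq.blocks.getD j 0 = shellCard r.Carrier j :=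
  getD_shellSizes j

lemma iso_iff_shellSeq_eq : CCausetIso r s ↔ r.shellSeq = s.shellSeq := by
  rw [iso_iff_shellCard_eq, funext_iff]
  simp only [← getD_blocks_shellSeq]
  exact ⟨Composition.eq_of_getD_blocks_eq, fun h j => by rw [h]⟩

end CCausetOrder

namespace Composition
variable {n : ℕ} (c : Composition n)

lemma index_surjective : Function.Surjective c.index :=
  fun i => ⟨c.embedding i ⟨0, c.one_le_blocksFun i⟩, c.index_embedding _ _⟩

lemma card_index_eq (i : Fin c.length) : Nat.card {a // c.index a = i} = c.blocksFun i := by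
  calc Nat.card {a // c.index a = i} = Nat.card (Set.range (c.embedding i)) :=
        Nat.card_congr <| Equiv.subtypeEquivRight fun a => by
          rw [c.mem_range_embedding_iff', eq_comm]
    _ = c.blocksFun i := by
      rw [Nat.card_range_of_injective (c.embedding i).injective, Nat.card_eq_fintype_card,
        Fintype.card_fin]

def toCCausetOrder : CCausetOrder n :=
  ⟨PartialOrder.layered c.index, isCCauset_layered c.index⟩

lemma height_toCCausetOrder (a : c.toCCausetOrder.Carrier) : height a = (c.index a : ℕ) := by
  refine height_eq_of_lt_iff_lt (f := fun a : c.toCCausetOrder.Carrier => (c.index a : ℕ))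
    (fun _ _ => Iff.rfl) (fun a j hj => ?_) a
  obtain ⟨b, hb⟩ := c.index_surjective ⟨j, hj.trans (c.index a).isLt⟩
  exact ⟨b, congrArg Fin.val hb⟩

lemma shellCard_toCCausetOrder (j : ℕ) :
    shellCard c.toCCausetOrder.Carrier j = c.blocks.getD j 0 := by
  have hfiber : shellCard c.toCCausetOrder.Carrier j = Nat.card {a // (c.index a : ℕ) = j} :=
    Nat.card_congr <| Equiv.subtypeEquivRight fun a => by rw [height_toCCausetOrder, Nat.cast_inj]
  rw [hfiber]
  by_cases hj : j < c.length
  · calc Nat.card {a // (c.index a : ℕ) = j} = Nat.card {a // c.index a = ⟨j, hj⟩} :=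
          Nat.card_congr <| Equiv.subtypeEquivRight fun a => by rw [Fin.ext_iff]
      _ = c.blocks.getD j 0 := by
        rw [card_index_eq, List.getD_eq_getElem _ _ hj]
        rfl
  · rw [List.getD_eq_default _ _ (not_lt.1 hj)]
    exact @Nat.card_of_isEmpty _ ⟨fun a => hj (a.2 ▸ (c.index a.1).isLt)⟩

lemma shellSeq_toCCausetOrder : c.toCCausetOrder.shellSeq = c :=
  eq_of_getD_blocks_eq fun j => by
    rw [CCausetOrder.getD_blocks_shellSeq, shellCard_toCCausetOrder]

end Composition

noncomputable def shellSeqEquiv (n : ℕ) : Quot (CCausetIso (n := n)) ≃ Composition n :=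
  Equiv.ofBijective
    (Quot.lift CCausetOrder.shellSeq fun _ _ => CCausetOrder.iso_iff_shellSeq_eq.1)
    ⟨by
      rintro ⟨r⟩ ⟨s⟩ h
      exact Quot.sound (CCausetOrder.iso_iff_shellSeq_eq.2 h),
    fun c => ⟨Quot.mk _ c.toCCausetOrder, c.shellSeq_toCCausetOrder⟩⟩

theorem stmt_1_general (n : ℕ) : Nat.card (Quot (CCausetIso (n := n))) = 2 ^ (n - 1) := by
  rw [Nat.card_congr (shellSeqEquiv n), Nat.card_eq_fintype_card, composition_card]

/-- The number of c-causets of cardinality `n`, up to isomorphism, is `2^(n-1)`. -/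
theorem stmt_1 (n : ℕ) (hn : 0 < n) :
    Nat.card (Quot (CCausetIso (n := n))) = 2 ^ (n - 1) :=
  stmt_1_general n
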